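/- For a single constraint h : ℝⁿ → ℝ with ‖∇h(x)‖² ≥ k > 0 along the trajectory, any solution of ẋ = P(x)f(x,t) - c·h(x)∇h(x) with c > 0 satisfies h(x(t))² ≤ h(x(0))² e^{-2ckt}; i.e., exponential convergence to the constraint surface. -/

import Mathlib

open scoped RealInnerProductSpace

/-!
Along the flow, `d/dt (h ∘ x) = ⟪∇h, P f⟫ - c h ‖∇h‖² = -c h ‖∇h‖²`, because the projected
field is tangent to the level sets of `h`. Hence `V = (h ∘ x)²` satisfies
`V' = -2c‖∇h‖² V ≤ -2ck V`, and the comparison `V(t) ≤ V(0) e^{-2ckt}` follows since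
`V(t) e^{2ckt}` is nonincreasing.
-/

open Real

theorem HasGradientAt.comp_hasDerivAt {E : Type*} [NormedAddCommGroup E]
    [InnerProductSpace ℝ E] [CompleteSpace E] {f : E → ℝ} {g : E} {x : ℝ → E} {v : E} {t : ℝ}
    (hf : HasGradientAt f g (x t)) (hx : HasDerivAt x v t) :
    HasDerivAt (fun s => f (x s)) ⟪g, v⟫ t := by
  simpa [InnerProductSpace.toDual_apply_apply, Function.comp_def] using
    hf.hasFDerivAt.comp_hasDerivAt t hx

theorem le_mul_exp_of_hasDerivAt_le_mul {V V' : ℝ → ℝ} {K a t : ℝ}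
    (hV : ∀ s, HasDerivAt V (V' s) s) (hle : ∀ s, V' s ≤ K * V s) (hat : a ≤ t) :
    V t ≤ V a * exp (K * (t - a)) := by
  have hW : ∀ s, HasDerivAt (fun s => V s * exp (-K * s))
      (V' s * exp (-K * s) + V s * (-K * exp (-K * s))) s := fun s =>
    (hV s).mul (by simpa [mul_comm] using ((hasDerivAt_id s).const_mul (-K)).exp)
  have hanti : Antitone fun s => V s * exp (-K * s) :=
    antitone_of_hasDerivAt_nonpos hW fun s => by
      rw [Pi.zero_apply]
      nlinarith [mul_nonpos_of_nonpos_of_nonneg (sub_nonpos.2 (hle s)) (exp_pos (-K * s)).le]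
  calc V t = V t * exp (-K * t) * exp (K * t) := by
          rw [mul_assoc, ← exp_add, neg_mul, neg_add_cancel, exp_zero, mul_one]
    _ ≤ V a * exp (-K * a) * exp (K * t) := by gcongr ?_ * _; exact hanti hat
    _ = V a * exp (K * (t - a)) := by rw [mul_assoc, ← exp_add]; ring_nf

theorem sliding_exponential_convergence_general {n : ℕ}
    (h : EuclideanSpace ℝ (Fin n) → ℝ)
    (gh : EuclideanSpace ℝ (Fin n) → EuclideanSpace ℝ (Fin n))
    (hgrad : ∀ p, HasGradientAt h (gh p) p)
    (c k : ℝ) (hc : 0 < c)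
    (x : ℝ → EuclideanSpace ℝ (Fin n))
    (Pf : ℝ → EuclideanSpace ℝ (Fin n))
    (htan : ∀ t, ⟪gh (x t), Pf t⟫ = 0)
    (hx : ∀ t, HasDerivAt x (Pf t - (c * h (x t)) • gh (x t)) t)
    (hbound : ∀ t, k ≤ ‖gh (x t)‖ ^ 2) :
    ∀ t ≥ (0 : ℝ), (h (x t)) ^ 2 ≤ (h (x 0)) ^ 2 * Real.exp (-2 * c * k * t) := by
  intro t ht
  have hV : ∀ s, HasDerivAt (fun s => h (x s) ^ 2)
      (-2 * c * ‖gh (x s)‖ ^ 2 * h (x s) ^ 2) s := fun s => by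
    refine (((hgrad (x s)).comp_hasDerivAt (hx s)).pow 2).congr_deriv ?_
    rw [inner_sub_right, inner_smul_right, htan, real_inner_self_eq_norm_sq]
    ring
  have hdecay : ∀ s, -2 * c * ‖gh (x s)‖ ^ 2 * h (x s) ^ 2 ≤ -2 * c * k * h (x s) ^ 2 :=
    fun s => by
      nlinarith [mul_le_mul_of_nonneg_left (hbound s) (mul_nonneg hc.le (sq_nonneg (h (x s))))]
  simpa using le_mul_exp_of_hasDerivAt_le_mul hV hdecay ht

/-- For a single constraint `h` with `‖∇h(x(t))‖² ≥ k > 0` along the trajectory,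
any solution of `ẋ = P(x)f(x,t) - c h(x) ∇h(x)` with `c > 0` satisfies
`h(x(t))² ≤ h(x(0))² e^{-2ckt}`: exponential convergence to the constraint surface. -/
theorem sliding_exponential_convergence {n : ℕ}
    (h : EuclideanSpace ℝ (Fin n) → ℝ)
    (gh : EuclideanSpace ℝ (Fin n) → EuclideanSpace ℝ (Fin n))
    (hgrad : ∀ p, HasGradientAt h (gh p) p)
    (c k : ℝ) (hc : 0 < c) (hk : 0 < k)
    (x : ℝ → EuclideanSpace ℝ (Fin n))
    (Pf : ℝ → EuclideanSpace ℝ (Fin n))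
    (htan : ∀ t, ⟪gh (x t), Pf t⟫ = 0)
    (hx : ∀ t, HasDerivAt x (Pf t - (c * h (x t)) • gh (x t)) t)
    (hbound : ∀ t, k ≤ ‖gh (x t)‖ ^ 2) :
    ∀ t ≥ (0 : ℝ), (h (x t)) ^ 2 ≤ (h (x 0)) ^ 2 * Real.exp (-2 * c * k * t) :=
  sliding_exponential_convergence_general h gh hgrad c k hc x Pf htan hx hbound
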